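/- arXiv:math/9910169 — 3 statements merged into one kernel-verified Lean document; each statement's English description precedes it below -/
import Mathlib

section
/- If (x_n) is a sequence in a Banach space X such that for every subset M of the index set the partial sums over finite subsets of M converge weakly, then the series ∑ x_n converges unconditionally in norm (Orlicz–Pettis type consequence). -/
/-!
Code subsets of the index set by points `ω` of the Cantor space `ι → Bool` and let `f ω` be the
weak sum of the corresponding subseries. Each `φ ∘ f` is a uniformly convergent series of
continuous functions, so `f` is weakly continuous; its values lie in the closed span of the `x i`,
which is separable and hence covered by countably many closed `ε/3`-balls, and these are weakly
closed. By Baire one of their preimages has interior, and toggling a single coordinate `i` outside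
a finite set keeps `ω` inside it while moving `f ω` by `x i`; hence `‖x i‖ < ε` for all but finitely
many `i`.
If the series were not unconditionally Cauchy, there would be disjoint finite blocks with sums of
norm at least `ε`, and the block sums inherit the hypothesis: a contradiction.
-/

open Filter Topology Set TopologicalSpace Metric Function

theorem HasSum.sum_finset_blocks {α β ι : Type*} [AddCommMonoid α] [TopologicalSpace α]
    [ContinuousAdd α] [RegularSpace α] {f : β → α} {a : α} {B : ι → Finset β}
    (hB : Pairwise (Disjoint on B)) (h : HasSum (fun i : ⋃ k, (B k : Set β) => f i) a) :
    HasSum (fun k => ∑ i ∈ B k, f i) a := by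
  have hB' : Pairwise (Disjoint on fun k => (B k : Set β)) :=
    fun j k hjk => Finset.disjoint_coe.2 (hB hjk)
  have h' := (Equiv.hasSum_iff (unionEqSigmaOfDisjoint hB').symm).2 h
  exact h'.sigma fun k => (B k).hasSum f

theorem Finset.exists_pairwise_disjoint_seq {ι : Type*} [DecidableEq ι]
    (T : Finset ι → Finset ι) (hT : ∀ s, Disjoint (T s) s) :
    ∃ s : ℕ → Finset ι, Pairwise (Disjoint on fun k => T (s k)) := by
  let s : ℕ → Finset ι := fun k => Nat.rec ∅ (fun _ u => u ∪ T u) k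
  have hs_mono : Monotone s := monotone_nat_of_le_succ fun _ => Finset.subset_union_left
  have hT_sub : ∀ j k, j < k → T (s j) ⊆ s k := fun j k hjk =>
    Finset.subset_union_right.trans (hs_mono hjk)
  refine ⟨s, fun j k hjk => ?_⟩
  rcases hjk.lt_or_gt with hlt | hgt
  · exact ((hT (s k)).mono_right (hT_sub j k hlt)).symm
  · exact (hT (s j)).mono_right (hT_sub k j hgt)

theorem tendsto_update_cofinite {ι β : Type*} [DecidableEq ι] [TopologicalSpace β]
    (ω : ι → β) (b : β) : Tendsto (fun i => update ω i b) cofinite (𝓝 ω) :=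
  tendsto_pi_nhds.2 fun j => tendsto_nhds_of_eventually_eq <|
    (eventually_cofinite_ne j).mono fun _ hij => update_of_ne hij.symm b ω

theorem continuous_tsum_indicator {ι F : Type*} [NormedAddCommGroup F] [CompleteSpace F]
    {g : ι → F} (hg : Summable fun i => ‖g i‖) :
    Continuous fun ω : ι → Bool => ∑' i, {i | ω i = true}.indicator g i := by
  refine continuous_tsum (fun i => ?_) hg fun i _ => norm_indicator_le_norm_self g i
  have hcoord : (fun ω : ι → Bool => {i | ω i = true}.indicator g i)
      = (fun b : Bool => if b = true then g i else 0) ∘ fun ω => ω i := by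
    ext ω
    simp [indicator_apply]
  rw [hcoord]
  exact continuous_of_discreteTopology.comp (continuous_apply i)

section WeakSpace

variable {X : Type*} [NormedAddCommGroup X] [NormedSpace ℝ X]

theorem hasSum_toWeakSpace_iff {ι : Type*} {x : ι → X} {a : X} :
    HasSum (fun i => toWeakSpace ℝ X (x i)) (toWeakSpace ℝ X a) ↔
      ∀ φ : X →L[ℝ] ℝ, HasSum (fun i => φ (x i)) (φ a) := by
  have heval := IsInducing.induced fun (y : WeakSpace ℝ X) (φ : X →L[ℝ] ℝ) => φ y
  refine heval.tendsto_nhds_iff.trans ?_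
  rw [tendsto_pi_nhds]
  simp only [HasSum, comp_def, ← map_sum (toWeakSpace ℝ X), ← map_sum (_ : X →L[ℝ] ℝ)]
  rfl

theorem Convex.isClosed_toWeakSpace_image {s : Set X} (hconv : Convex ℝ s) (hs : IsClosed s) :
    IsClosed (toWeakSpace ℝ X '' s) := by
  rw [← hs.closure_eq, hconv.toWeakSpace_closure ℝ]
  exact isClosed_closure

theorem exists_nonempty_interior_preimage_closedBall {Ω : Type*} [TopologicalSpace Ω]
    [BaireSpace Ω] [Nonempty Ω] {f : Ω → X} (hf : Continuous fun ω => toWeakSpace ℝ X (f ω))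
    (hf_sep : IsSeparable (range f)) {r : ℝ} (hr : 0 < r) :
    ∃ c, (interior (f ⁻¹' closedBall c r)).Nonempty := by
  obtain ⟨D, hD_count, hfD⟩ := hf_sep
  have : Countable D := hD_count.to_subtype
  have hclosed (c : D) : IsClosed (f ⁻¹' closedBall (c : X) r) := by
    have h := ((convex_closedBall (c : X) r).isClosed_toWeakSpace_image
      isClosed_closedBall).preimage hf
    rwa [← comp_def, preimage_comp, (toWeakSpace ℝ X).injective.preimage_image] at h
  have hcover : ⋃ c : D, f ⁻¹' closedBall (c : X) r = univ := by
    refine eq_univ_of_forall fun ω => ?_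
    obtain ⟨c, hcD, hc⟩ := Metric.mem_closure_iff.1 (hfD (mem_range_self ω)) r hr
    exact mem_iUnion.2 ⟨⟨c, hcD⟩, mem_closedBall.2 (dist_comm c (f ω) ▸ hc.le)⟩
  obtain ⟨c, hc⟩ := nonempty_interior_of_iUnion_of_closed hclosed hcover
  exact ⟨c, hc⟩

section SubseriesSum

variable {ι : Type*}

/-- `ω` codes the subseries indexed by `{i | ω i = true}`. -/
noncomputable def weakSubseriesSum (z : ι → X) (ω : ι → Bool) : X :=
  (toWeakSpace ℝ X).symm (∑' i : {i | ω i = true}, toWeakSpace ℝ X (z i))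

variable {z : ι → X}

theorem hasSum_weakSubseriesSum (hz : ∀ M : Set ι, Summable fun i : M => toWeakSpace ℝ X (z i))
    (ω : ι → Bool) :
    HasSum (fun i : {i | ω i = true} => toWeakSpace ℝ X (z i))
      (toWeakSpace ℝ X (weakSubseriesSum z ω)) := by
  simpa [weakSubseriesSum] using (hz _).hasSum

theorem continuous_weakSubseriesSum
    (hz : ∀ M : Set ι, Summable fun i : M => toWeakSpace ℝ X (z i)) :
    Continuous fun ω => toWeakSpace ℝ X (weakSubseriesSum z ω) := by
  refine WeakBilin.continuous_of_continuous_eval _ fun φ => ?_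
  have hφ (ω : ι → Bool) : φ (weakSubseriesSum z ω) =
      ∑' i, {i | ω i = true}.indicator (fun i => φ (z i)) i := by
    rw [← tsum_subtype]
    exact (hasSum_toWeakSpace_iff.1 (hasSum_weakSubseriesSum hz ω) φ).tsum_eq.symm
  have hsummable : Summable fun i => φ (z i) :=
    (Equiv.Set.univ ι).summable_iff.1 (hasSum_toWeakSpace_iff.1 (hz univ).hasSum φ).summable
  change Continuous fun ω => φ (weakSubseriesSum z ω)
  simp only [hφ]
  exact continuous_tsum_indicator hsummable.norm

theorem weakSubseriesSum_mem_closure_span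
    (hz : ∀ M : Set ι, Summable fun i : M => toWeakSpace ℝ X (z i)) (ω : ι → Bool) :
    weakSubseriesSum z ω ∈ closure (Submodule.span ℝ (range z) : Set X) := by
  rw [← (toWeakSpace ℝ X).injective.mem_set_image,
    (Submodule.span ℝ (range z)).convex.toWeakSpace_closure ℝ]
  refine mem_closure_of_tendsto (hasSum_weakSubseriesSum hz ω) (Eventually.of_forall fun t => ?_)
  rw [← map_sum]
  exact mem_image_of_mem _ (Submodule.sum_mem _ fun i _ => Submodule.subset_span ⟨i, rfl⟩)

theorem weakSubseriesSum_update_true [DecidableEq ι]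
    (hz : ∀ M : Set ι, Summable fun i : M => toWeakSpace ℝ X (z i)) (ω : ι → Bool) (i : ι) :
    weakSubseriesSum z (update ω i true) = weakSubseriesSum z (update ω i false) + z i := by
  set z' := fun j => toWeakSpace ℝ X (z j)
  have hind (ω' : ι → Bool) : HasSum ({j | ω' j = true}.indicator z')
      (toWeakSpace ℝ X (weakSubseriesSum z ω')) :=
    hasSum_subtype_iff_indicator.1 (hasSum_weakSubseriesSum hz ω')
  have hinsert : {j | update ω i true j = true}.indicator z' =
      update ({j | update ω i false j = true}.indicator z') i (z' i) := by
    ext j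
    by_cases hj : j = i <;> simp [hj, indicator_apply]
  have h := (hind (update ω i false)).update i (z' i)
  rw [← hinsert, indicator_of_notMem (by simp), sub_zero] at h
  apply (toWeakSpace ℝ X).injective
  rw [map_add, add_comm]
  exact (hind _).unique h

theorem tendsto_cofinite_zero_of_forall_summable_toWeakSpace [Countable ι]
    (hz : ∀ M : Set ι, Summable fun i : M => toWeakSpace ℝ X (z i)) :
    Tendsto z cofinite (𝓝 0) := by
  classical
  have hsep : IsSeparable (range (weakSubseriesSum z)) :=
    (countable_range z).isSeparable.span.closure.mono
      (range_subset_iff.2 (weakSubseriesSum_mem_closure_span hz))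
  rw [NormedAddGroup.tendsto_nhds_zero]
  intro ε hε
  obtain ⟨c, ω, hω⟩ := exists_nonempty_interior_preimage_closedBall
    (continuous_weakSubseriesSum hz) hsep (by positivity : 0 < ε / 3)
  have hnear (b : Bool) : ∀ᶠ i in cofinite, ‖weakSubseriesSum z (update ω i b) - c‖ ≤ ε / 3 :=
    ((tendsto_update_cofinite ω b).eventually (isOpen_interior.mem_nhds hω)).mono
      fun i hi => mem_closedBall_iff_norm.1 (interior_subset hi :)
  filter_upwards [hnear true, hnear false] with i htrue hfalse
  calc ‖z i‖ = ‖(weakSubseriesSum z (update ω i true) - c) -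
        (weakSubseriesSum z (update ω i false) - c)‖ := by
        rw [weakSubseriesSum_update_true hz]; congr 1; abel
    _ ≤ ε / 3 + ε / 3 := norm_sub_le_of_le htrue hfalse
    _ < ε := by linarith

end SubseriesSum

theorem summable_of_forall_summable_toWeakSpace [CompleteSpace X] {ι : Type*} {x : ι → X}
    (hx : ∀ M : Set ι, Summable fun i : M => toWeakSpace ℝ X (x i)) : Summable x := by
  classical
  by_contra hns
  obtain ⟨ε, hε, hfar⟩ : ∃ ε > 0, ∀ s : Finset ι, ∃ t, Disjoint t s ∧ ε ≤ ‖∑ i ∈ t, x i‖ := by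
    rw [summable_iff_vanishing_norm] at hns
    push Not at hns
    exact hns
  choose T hT_disj hT_norm using hfar
  obtain ⟨s, hs⟩ := Finset.exists_pairwise_disjoint_seq T hT_disj
  have hblocks (K : Set ℕ) : Summable fun k : K => toWeakSpace ℝ X (∑ i ∈ T (s k), x i) := by
    have hK : Pairwise (Disjoint on fun k : K => T (s k)) :=
      fun j k hjk => hs (Subtype.coe_ne_coe.2 hjk)
    simp only [map_sum]
    exact ((hx (⋃ k : K, (T (s k) : Set ι))).hasSum.sum_finset_blocks hK).summable
  have hsmall := tendsto_cofinite_zero_of_forall_summable_toWeakSpace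
    (z := fun k => ∑ i ∈ T (s k), x i) hblocks
  obtain ⟨k, hk⟩ := (NormedAddGroup.tendsto_nhds_zero.1 hsmall ε hε).exists
  exact (hT_norm (s k)).not_gt hk

end WeakSpace

/-- Orlicz–Pettis type consequence: if every subseries of `∑ xₙ` has weakly convergent
partial sums (over finite subsets), then `∑ xₙ` converges unconditionally in norm. -/
theorem stmt0 {X : Type*} [NormedAddCommGroup X] [NormedSpace ℝ X] [CompleteSpace X]
    (x : ℕ → X)
    (h : ∀ M : Set ℕ, ∃ a : X, ∀ φ : X →L[ℝ] ℝ,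
      HasSum (fun n : M => φ (x (↑n))) (φ a)) :
    Summable x :=
  summable_of_forall_summable_toWeakSpace fun M =>
    let ⟨_, ha⟩ := h M
    ⟨_, hasSum_toWeakSpace_iff.2 ha⟩
end

section
/- Let F(t,ν) be a measurable function on Q = [0,1)×[0,1) with |F(t,ν)| ≤ B for a.e. (t,ν), and assume F(t,·) is continuous in ν for a.e. t. Then for every ν₀ ∈ [0,1), ess sup_t |F(t,ν₀)| ≤ B. -/
open MeasureTheory

/-- If `F` is measurable on `Q = [0,1)×[0,1)`, bounded a.e. by `B`, and continuous in the
second variable for a.e. `t`, then for EVERY `ν₀ ∈ [0,1)`, `ess sup_t |F(t,ν₀)| ≤ B`. -/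
theorem stmt6 (F : ℝ → ℝ → ℂ) (B : ℝ) (hB : 0 < B)
    (hmeas : Measurable fun p : ℝ × ℝ => F p.1 p.2)
    (hbound : ∀ᵐ p : ℝ × ℝ
        ∂((volume.restrict (Set.Ico (0:ℝ) 1)).prod (volume.restrict (Set.Ico (0:ℝ) 1))),
      ‖F p.1 p.2‖ ≤ B)
    (hcont : ∀ᵐ t : ℝ ∂(volume.restrict (Set.Ico (0:ℝ) 1)),
      ContinuousOn (F t) (Set.Ico (0:ℝ) 1)) :
    ∀ ν₀ ∈ Set.Ico (0:ℝ) 1,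
      ∀ᵐ t : ℝ ∂(volume.restrict (Set.Ico (0:ℝ) 1)), ‖F t ν₀‖ ≤ B := by
  intro ν₀ hν₀
  have hfub : ∀ᵐ t ∂(volume.restrict (Set.Ico (0:ℝ) 1)),
      ∀ᵐ ν ∂(volume.restrict (Set.Ico (0:ℝ) 1)), ‖F t ν‖ ≤ B :=
    Measure.ae_ae_of_ae_prod hbound
  filter_upwards [hfub, hcont] with t hae hc
  by_contra hgt
  push_neg at hgt
  have hcν : ContinuousWithinAt (fun ν => ‖F t ν‖) (Set.Ico (0:ℝ) 1) ν₀ :=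
    (hc ν₀ hν₀).norm
  have hV : (fun ν => ‖F t ν‖) ⁻¹' Set.Ioi B ∈ nhdsWithin ν₀ (Set.Ico (0:ℝ) 1) :=
    hcν (Ioi_mem_nhds hgt)
  rw [mem_nhdsWithin] at hV
  obtain ⟨V, hVopen, hν₀V, hVsub⟩ := hV
  obtain ⟨ε, hε, hball⟩ := Metric.isOpen_iff.mp hVopen ν₀ hν₀V
  set b := min 1 (ν₀ + ε) with hb
  have hν₀b : ν₀ < b := lt_min hν₀.2 (by linarith)
  have hsub : Set.Ico ν₀ b ⊆ V ∩ Set.Ico (0:ℝ) 1 := by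
    intro x hx
    refine ⟨hball ?_, le_trans hν₀.1 hx.1, lt_of_lt_of_le hx.2 (min_le_left _ _)⟩
    rw [Metric.mem_ball, Real.dist_eq, abs_lt]
    have h2 := lt_of_lt_of_le hx.2 (min_le_right _ _)
    constructor <;> linarith [hx.1]
  have hzero : volume.restrict (Set.Ico (0:ℝ) 1) (Set.Ico ν₀ b) = 0 := by
    refine measure_mono_null ?_ (ae_iff.mp hae)
    intro x hx
    simp only [Set.mem_setOf_eq, not_le]
    exact hVsub (hsub hx)
  rw [Measure.restrict_apply' measurableSet_Ico] at hzero
  have heq : Set.Ico ν₀ b ∩ Set.Ico (0:ℝ) 1 = Set.Ico ν₀ b :=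
    Set.inter_eq_left.mpr (fun x hx => (hsub hx).2)
  rw [heq, Real.volume_Ico] at hzero
  have := sub_pos.mpr hν₀b
  simp [ENNReal.ofReal_eq_zero] at hzero
  linarith
end

section
/- Let (G_k)_{k∈ℤ} be measurable functions on ℝ and b > 0 such that ∑_k |G_k(t)| ≤ B a.e. and ∑_k |G_k(t + k/b)| ≤ B a.e. Then for every f ∈ L²(ℝ) the series ∑_k (T_{k/b}f)·G_k converges unconditionally in L²(ℝ)-norm. -/
/-!
Pointwise, Cauchy–Schwarz with weights `‖G k t‖` bounds `‖∑_{k ∈ s} f (t - a k) * G k t‖²` by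
`B * ∑_{k ∈ s} ‖f (t - a k)‖² ‖G k t‖`. Integrating and translating each term by `a k` gives
`‖∑_{k ∈ s} T_{a k} f · G k‖₂² ≤ B * ∑_{k ∈ s} c k` with `c k = ∫ ‖f t‖² ‖G k (t + a k)‖ dt`,
and the second hypothesis gives `∑_k c k ≤ B * ‖f‖₂² < ∞`. Hence the partial sums satisfy the
Cauchy criterion for unconditional convergence in the complete space `L²`.
-/

open MeasureTheory
open scoped ENNReal

lemma enorm_sum_mul_sq_le {ι R : Type*} [SeminormedRing R] (s : Finset ι) (a g : ι → R) :
    ‖∑ i ∈ s, a i * g i‖ₑ ^ 2 ≤ (∑ i ∈ s, ‖g i‖ₑ) * ∑ i ∈ s, ‖a i‖ₑ ^ 2 * ‖g i‖ₑ := by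
  have hnn : ‖∑ i ∈ s, a i * g i‖₊ ^ 2 ≤ (∑ i ∈ s, ‖g i‖₊) * ∑ i ∈ s, ‖a i‖₊ ^ 2 * ‖g i‖₊ :=
    calc ‖∑ i ∈ s, a i * g i‖₊ ^ 2 ≤ (∑ i ∈ s, ‖a i‖₊ * ‖g i‖₊) ^ 2 := by
          gcongr
          exact (nnnorm_sum_le _ _).trans (Finset.sum_le_sum fun i _ => nnnorm_mul_le _ _)
      _ ≤ _ := Finset.sum_sq_le_sum_mul_sum_of_sq_le_mul s (fun _ _ => zero_le)
          (fun _ _ => zero_le) fun _ _ => le_of_eq (by ring)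
  simp only [enorm_eq_nnnorm]
  exact_mod_cast hnn

lemma tsum_enorm_le_ofReal {ι E : Type*} [SeminormedAddGroup E] {x : ι → E} {B : ℝ}
    (h : ∀ s : Finset ι, ∑ i ∈ s, ‖x i‖ ≤ B) : ∑' i, ‖x i‖ₑ ≤ ENNReal.ofReal B := by
  refine ENNReal.summable.tsum_le_of_sum_le fun s => ?_
  simpa only [ENNReal.ofReal_sum_of_nonneg fun i _ => norm_nonneg (x i), ofReal_norm]
    using ENNReal.ofReal_le_ofReal (h s)

lemma summable_of_enorm_sum_sq_le {ι E : Type*} [NormedAddCommGroup E] [CompleteSpace E]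
    {g : ι → E} {r : ι → ℝ≥0∞} (hr : ∑' i, r i ≠ ∞)
    (h : ∀ s : Finset ι, ‖∑ i ∈ s, g i‖ₑ ^ 2 ≤ ∑ i ∈ s, r i) : Summable g := by
  refine summable_iff_vanishing_norm.2 fun ε hε => ?_
  obtain ⟨s, hs⟩ :=
    summable_iff_vanishing_norm.1 (ENNReal.summable_toReal hr) (ε ^ 2) (by positivity)
  refine ⟨s, fun t ht => ?_⟩
  have hsq : ‖∑ i ∈ t, g i‖ ^ 2 ≤ ∑ i ∈ t, (r i).toReal := by
    rw [← ENNReal.toReal_sum fun i _ => ne_top_of_le_ne_top hr (ENNReal.le_tsum i),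
      ← toReal_enorm, ← ENNReal.toReal_pow]
    exact ENNReal.toReal_mono (ne_top_of_le_ne_top hr (ENNReal.sum_le_tsum t)) (h t)
  exact lt_of_pow_lt_pow_left₀ 2 hε.le (hsq.trans_lt ((le_abs_self _).trans_lt (hs t ht)))

lemma eLpNorm_two_sq {α E : Type*} [MeasurableSpace α] {μ : Measure α} [NormedAddCommGroup E]
    (f : α → E) : eLpNorm f 2 μ ^ 2 = ∫⁻ x, ‖f x‖ₑ ^ 2 ∂μ := by
  simpa using eLpNorm_nnreal_pow_eq_lintegral (f := f) (μ := μ) (p := 2) two_ne_zero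

section Lp
variable {α E ι : Type*} [MeasurableSpace α] {μ : Measure α} [NormedAddCommGroup E]
  {p : ℝ≥0∞} {u : ι → α → E}

lemma MeasureTheory.Lp.coeFn_finsetSum_toLp (hu : ∀ i, MemLp (u i) p μ) (s : Finset ι) :
    ⇑(∑ i ∈ s, (hu i).toLp (u i)) =ᵐ[μ] fun x => ∑ i ∈ s, u i x := by
  filter_upwards [Lp.coeFn_fun_finsetSum s fun i => (hu i).toLp (u i),
    (Filter.eventually_all_finset s).2 fun i _ => (hu i).coeFn_toLp] with x hsum hterm
  rw [hsum]
  exact Finset.sum_congr rfl hterm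

lemma MeasureTheory.Lp.enorm_finsetSum_toLp [Fact (1 ≤ p)] (hu : ∀ i, MemLp (u i) p μ)
    (s : Finset ι) :
    ‖∑ i ∈ s, (hu i).toLp (u i)‖ₑ = eLpNorm (fun x => ∑ i ∈ s, u i x) p μ := by
  rw [Lp.enorm_def, eLpNorm_congr_ae (Lp.coeFn_finsetSum_toLp hu s)]

lemma exists_memLp_tendsto_sum_of_summable_toLp [Fact (1 ≤ p)] (hu : ∀ i, MemLp (u i) p μ)
    (hsum : Summable fun i => (hu i).toLp (u i)) :
    ∃ L : α → E, MemLp L p μ ∧ ∀ ε : ℝ, 0 < ε → ∃ s : Finset ι, ∀ s' : Finset ι, s ⊆ s' →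
      eLpNorm (fun x => (∑ i ∈ s', u i x) - L x) p μ < ENNReal.ofReal ε := by
  obtain ⟨S, hS⟩ := hsum
  refine ⟨S, Lp.memLp S, fun ε hε => ?_⟩
  obtain ⟨s, hs⟩ := Filter.eventually_atTop.1
    (EMetric.tendsto_nhds.1 hS _ (ENNReal.ofReal_pos.2 hε))
  refine ⟨s, fun s' hs' => ?_⟩
  change eLpNorm ((fun x => ∑ i ∈ s', u i x) - ⇑S) p μ < _
  rw [← eLpNorm_congr_ae ((Lp.coeFn_finsetSum_toLp hu s').sub (Filter.EventuallyEq.refl _ S)),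
    ← Lp.edist_def]
  exact hs s' hs'

end Lp

section Shift
variable {X ι R : Type*} [MeasurableSpace X] [AddGroup X] [MeasurableAdd X] {μ : Measure X}
  [μ.IsAddRightInvariant] [NormedRing R] (a : ι → X) {f : X → R} {G : ι → X → R}

lemma lintegral_enorm_sum_shift_mul_sq_le (hf : AEStronglyMeasurable f μ)
    (hG : ∀ k, AEStronglyMeasurable (G k) μ) {C : ℝ≥0∞} (hC : ∀ᵐ t ∂μ, ∑' k, ‖G k t‖ₑ ≤ C)
    (s : Finset ι) :
    ∫⁻ t, ‖∑ k ∈ s, f (t - a k) * G k t‖ₑ ^ 2 ∂μ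
      ≤ C * ∑ k ∈ s, ∫⁻ t, ‖f t‖ₑ ^ 2 * ‖G k (t + a k)‖ₑ ∂μ := by
  have hmeas : ∀ k, AEMeasurable (fun t => ‖f (t - a k)‖ₑ ^ 2 * ‖G k t‖ₑ) μ := fun k =>
    ((hf.comp_quasiMeasurePreserving (measurePreserving_sub_right μ (a k)).quasiMeasurePreserving
      ).enorm.pow_const 2).mul (hG k).enorm
  calc ∫⁻ t, ‖∑ k ∈ s, f (t - a k) * G k t‖ₑ ^ 2 ∂μ
      ≤ ∫⁻ t, C * ∑ k ∈ s, ‖f (t - a k)‖ₑ ^ 2 * ‖G k t‖ₑ ∂μ := by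
        refine lintegral_mono_ae ?_
        filter_upwards [hC] with t ht
        exact (enorm_sum_mul_sq_le s _ _).trans
          (mul_le_mul_left ((ENNReal.sum_le_tsum s).trans ht) _)
    _ = C * ∑ k ∈ s, ∫⁻ t, ‖f (t - a k)‖ₑ ^ 2 * ‖G k t‖ₑ ∂μ := by
        rw [lintegral_const_mul'' _ (Finset.aemeasurable_fun_sum s fun k _ => hmeas k),
          lintegral_finsetSum' s fun k _ => hmeas k]
    _ = C * ∑ k ∈ s, ∫⁻ t, ‖f t‖ₑ ^ 2 * ‖G k (t + a k)‖ₑ ∂μ := by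
        refine congrArg _ (Finset.sum_congr rfl fun k _ => ?_)
        rw [← lintegral_add_right_eq_self _ (a k)]
        simp only [add_sub_cancel_right]

lemma tsum_lintegral_enorm_sq_mul_shift_le [Countable ι] (hf : AEStronglyMeasurable f μ)
    (hG : ∀ k, AEStronglyMeasurable (G k) μ) {C : ℝ≥0∞}
    (hC : ∀ᵐ t ∂μ, ∑' k, ‖G k (t + a k)‖ₑ ≤ C) :
    ∑' k, ∫⁻ t, ‖f t‖ₑ ^ 2 * ‖G k (t + a k)‖ₑ ∂μ ≤ C * ∫⁻ t, ‖f t‖ₑ ^ 2 ∂μ := by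
  rw [← lintegral_tsum (f := fun k t => ‖f t‖ₑ ^ 2 * ‖G k (t + a k)‖ₑ) fun k =>
      (hf.enorm.pow_const 2).mul ((hG k).comp_quasiMeasurePreserving
        (measurePreserving_add_right μ (a k)).quasiMeasurePreserving).enorm,
    ← lintegral_const_mul'' _ (hf.enorm.pow_const 2)]
  refine lintegral_mono_ae ?_
  filter_upwards [hC] with t ht
  rw [ENNReal.tsum_mul_left, mul_comm]
  gcongr

theorem exists_memLp_tendsto_sum_shift_mul [Countable ι] [CompleteSpace R] (hf : MemLp f 2 μ)
    (hG : ∀ k, AEStronglyMeasurable (G k) μ) {C : ℝ≥0∞} (hC : C ≠ ∞)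
    (hC₁ : ∀ᵐ t ∂μ, ∑' k, ‖G k t‖ₑ ≤ C) (hC₂ : ∀ᵐ t ∂μ, ∑' k, ‖G k (t + a k)‖ₑ ≤ C) :
    ∃ L : X → R, MemLp L 2 μ ∧ ∀ ε : ℝ, 0 < ε → ∃ s : Finset ι, ∀ s' : Finset ι, s ⊆ s' →
      eLpNorm (fun t => (∑ k ∈ s', f (t - a k) * G k t) - L t) 2 μ < ENNReal.ofReal ε := by
  set c : ι → ℝ≥0∞ := fun k => ∫⁻ t, ‖f t‖ₑ ^ 2 * ‖G k (t + a k)‖ₑ ∂μ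
  have hf_sq : ∫⁻ t, ‖f t‖ₑ ^ 2 ∂μ ≠ ∞ := by
    rw [← eLpNorm_two_sq]
    exact ENNReal.pow_ne_top hf.eLpNorm_ne_top
  have hc : ∑' k, c k ≠ ∞ := ne_top_of_le_ne_top (ENNReal.mul_ne_top hC hf_sq)
    (tsum_lintegral_enorm_sq_mul_shift_le a hf.1 hG hC₂)
  have hsum_sq : ∀ s : Finset ι,
      eLpNorm (fun t => ∑ k ∈ s, f (t - a k) * G k t) 2 μ ^ 2 ≤ ∑ k ∈ s, C * c k := fun s => by
    rw [eLpNorm_two_sq, ← Finset.mul_sum]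
    exact lintegral_enorm_sum_shift_mul_sq_le a hf.1 hG hC₁ s
  have hu : ∀ k, MemLp (fun t => f (t - a k) * G k t) 2 μ := fun k => by
    refine ⟨(hf.1.comp_quasiMeasurePreserving
      (measurePreserving_sub_right μ (a k)).quasiMeasurePreserving).mul (hG k), ?_⟩
    have hk := hsum_sq {k}
    simp only [Finset.sum_singleton] at hk
    have hk_fin : eLpNorm (fun t => f (t - a k) * G k t) 2 μ ^ 2 ≠ ∞ := ne_top_of_le_ne_top
      (ENNReal.mul_ne_top hC (ne_top_of_le_ne_top hc (ENNReal.le_tsum k))) hk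
    exact lt_top_iff_ne_top.2 (by simpa using hk_fin)
  refine exists_memLp_tendsto_sum_of_summable_toLp hu
    (summable_of_enorm_sum_sq_le (r := fun k => C * c k) ?_ fun s => ?_)
  · rw [ENNReal.tsum_mul_left]
    exact ENNReal.mul_ne_top hC hc
  · rw [Lp.enorm_finsetSum_toLp]
    exact hsum_sq s

end Shift

theorem stmt14_general (b : ℝ) (G : ℤ → ℝ → ℂ) (hmeas : ∀ k, Measurable (G k)) (B : ℝ)
    (h1 : ∀ᵐ t : ℝ, ∀ M : Finset ℤ, ∑ k ∈ M, ‖G k t‖ ≤ B)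
    (h2 : ∀ᵐ t : ℝ, ∀ M : Finset ℤ, ∑ k ∈ M, ‖G k (t + (k : ℝ) / b)‖ ≤ B) :
    ∀ f : ℝ → ℂ, MemLp f 2 (volume : Measure ℝ) →
      ∃ L : ℝ → ℂ, MemLp L 2 (volume : Measure ℝ) ∧
        ∀ ε : ℝ, 0 < ε → ∃ s : Finset ℤ, ∀ s' : Finset ℤ, s ⊆ s' →
          eLpNorm (fun t => (∑ k ∈ s', f (t - (k : ℝ) / b) * G k t) - L t) 2
            (volume : Measure ℝ) < ENNReal.ofReal ε := by
  intro f hf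
  exact exists_memLp_tendsto_sum_shift_mul (fun k : ℤ => (k : ℝ) / b) hf
    (fun k => (hmeas k).aestronglyMeasurable) ENNReal.ofReal_ne_top
    (h1.mono fun _ ht => tsum_enorm_le_ofReal ht) (h2.mono fun _ ht => tsum_enorm_le_ofReal ht)

/-- If `∑_k |G_k(t)| ≤ B` a.e. and `∑_k |G_k(t + k/b)| ≤ B` a.e., then for every
`f ∈ L²(ℝ)` the series `∑_k (T_{k/b}f)·G_k` converges unconditionally in `L²`-norm. -/
theorem stmt14 (b : ℝ) (hb : 0 < b) (G : ℤ → ℝ → ℂ) (hmeas : ∀ k, Measurable (G k)) (B : ℝ)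
    (h1 : ∀ᵐ t : ℝ, ∀ M : Finset ℤ, ∑ k ∈ M, ‖G k t‖ ≤ B)
    (h2 : ∀ᵐ t : ℝ, ∀ M : Finset ℤ, ∑ k ∈ M, ‖G k (t + (k : ℝ) / b)‖ ≤ B) :
    ∀ f : ℝ → ℂ, MemLp f 2 (volume : Measure ℝ) →
      ∃ L : ℝ → ℂ, MemLp L 2 (volume : Measure ℝ) ∧
        ∀ ε : ℝ, 0 < ε → ∃ s : Finset ℤ, ∀ s' : Finset ℤ, s ⊆ s' →
          eLpNorm (fun t => (∑ k ∈ s', f (t - (k : ℝ) / b) * G k t) - L t) 2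
            (volume : Measure ℝ) < ENNReal.ofReal ε :=
  stmt14_general b G hmeas B h1 h2
end
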